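/- A triangular set T={T_1,...,T_r} in K[x_1,...,x_n] is regular if for each 2 ≤ i ≤ r the initial ini(T_i) is not identically zero on any irreducible component of Zero(sat({T_1,...,T_{i-1}})). -/

import Mathlib

open MvPolynomial

namespace Tri

/-- The initial of `f` with respect to the variable `i`: the leading coefficient of `f`
viewed as a univariate polynomial in `x_i`, expressed as a polynomial in the remaining
variables (an element of the same ring). -/
noncomputable def initial {K : Type*} [CommSemiring K] {σ : Type*} [DecidableEq σ]
    (f : MvPolynomial σ K) (i : σ) : MvPolynomial σ K :=
  ∑ m ∈ f.support.filter (fun m => m i = MvPolynomial.degreeOf i f),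
    MvPolynomial.monomial (Finsupp.erase i m) (MvPolynomial.coeff m f)

/-- `x_i` is the leading variable of `f`: it occurs in `f` and is the greatest variable
occurring in `f`. -/
def IsLeadingVar {K : Type*} [CommSemiring K] {n : ℕ} (f : MvPolynomial (Fin n) K)
    (i : Fin n) : Prop :=
  0 < MvPolynomial.degreeOf i f ∧ ∀ j, 0 < MvPolynomial.degreeOf j f → j ≤ i

/-- `T` (with leading variables `lvs`) is a triangular set: the polynomials of `T` are
nonconstant with pairwise distinct, increasing leading variables. -/
def IsTriangular {K : Type*} [CommSemiring K] {n r : ℕ} (T : Fin r → MvPolynomial (Fin n) K)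
    (lvs : Fin r → Fin n) : Prop :=
  StrictMono lvs ∧ ∀ j, IsLeadingVar (T j) (lvs j)

/-- `p` lies in `K[u]` where `u` is the parameter set of a triangular set with leading
variables `lvs`, i.e. no variable of `p` is a leading variable. -/
def inParams {K : Type*} [CommSemiring K] {n r : ℕ} (lvs : Fin r → Fin n)
    (p : MvPolynomial (Fin n) K) : Prop :=
  ∀ i ∈ p.vars, i ∉ Set.range lvs

/-- `T` is a regular triangular set: it is triangular, and for each `i` the ideal
`(T_1, …, T_{i-1}, ini(T_i))` has nonzero intersection with `K[u]`. -/
def IsRegular {K : Type*} [CommRing K] {n r : ℕ} (T : Fin r → MvPolynomial (Fin n) K)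
    (lvs : Fin r → Fin n) : Prop :=
  IsTriangular T lvs ∧
    ∀ i : Fin r, ∃ p ∈ Ideal.span (T '' {j | j < i} ∪ {initial (T i) (lvs i)}),
      p ≠ 0 ∧ inParams lvs p

/-- The product of the initials of a triangular set. -/
noncomputable def initProd {K : Type*} [CommSemiring K] {n r : ℕ}
    (T : Fin r → MvPolynomial (Fin n) K) (lvs : Fin r → Fin n) : MvPolynomial (Fin n) K :=
  ∏ j, initial (T j) (lvs j)

/-- The saturation `{f | ∃ d, a ^ d * f ∈ J}` of an ideal `J` by an element `a`. -/
def saturationBy {R : Type*} [CommRing R] (J : Ideal R) (a : R) : Ideal R where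
  carrier := {f | ∃ d : ℕ, a ^ d * f ∈ J}
  zero_mem' := ⟨0, by simpa using J.zero_mem⟩
  add_mem' := by
    rintro f g ⟨d1, h1⟩ ⟨d2, h2⟩
    refine ⟨d1 + d2, ?_⟩
    have h : a ^ (d1 + d2) * (f + g)
        = a ^ d2 * (a ^ d1 * f) + a ^ d1 * (a ^ d2 * g) := by ring
    rw [h]
    exact J.add_mem (J.mul_mem_left _ h1) (J.mul_mem_left _ h2)
  smul_mem' := by
    rintro c f ⟨d, h⟩
    exact ⟨d, by rw [smul_eq_mul, mul_left_comm]; exact J.mul_mem_left c h⟩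

/-- The saturation ideal `sat(T) = {f | ∃ d, I_T ^ d * f ∈ (T)}` of a triangular set. -/
noncomputable def satIdeal {K : Type*} [CommRing K] {n r : ℕ}
    (T : Fin r → MvPolynomial (Fin n) K) (lvs : Fin r → Fin n) :
    Ideal (MvPolynomial (Fin n) K) :=
  saturationBy (Ideal.span (Set.range T)) (initProd T lvs)

/-- The zero set `Zero(S/D)` in `E^n` of a system `S` of polynomials together with an
inequation `D ≠ 0`. -/
def zeroSet {K : Type*} [CommSemiring K] {n : ℕ} (E : Type*) [CommSemiring E] [Algebra K E]
    (S : Set (MvPolynomial (Fin n) K)) (D : MvPolynomial (Fin n) K) : Set (Fin n → E) :=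
  {x | (∀ f ∈ S, MvPolynomial.aeval x f = 0) ∧ MvPolynomial.aeval x D ≠ 0}

/-- The zero set `Zero(S)` in `E^n` of a system `S` of polynomials. -/
def zeroSet0 {K : Type*} [CommSemiring K] {n : ℕ} (E : Type*) [CommSemiring E] [Algebra K E]
    (S : Set (MvPolynomial (Fin n) K)) : Set (Fin n → E) :=
  {x | ∀ f ∈ S, MvPolynomial.aeval x f = 0}

/-- The zero set `Zero(I)` in `E^n` of an ideal `I`. -/
def zeroSetI {K : Type*} [CommSemiring K] {n : ℕ} (E : Type*) [CommSemiring E] [Algebra K E]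
    (I : Ideal (MvPolynomial (Fin n) K)) : Set (Fin n → E) :=
  {x | ∀ f ∈ I, MvPolynomial.aeval x f = 0}

/-- The Zariski closure in `E^n` of a set `S` (with respect to polynomials over `K`):
the zero set of all polynomials vanishing identically on `S`. -/
def zClosure (K : Type*) [CommSemiring K] {n : ℕ} {E : Type*} [CommSemiring E] [Algebra K E]
    (S : Set (Fin n → E)) : Set (Fin n → E) :=
  {x | ∀ f : MvPolynomial (Fin n) K, (∀ y ∈ S, MvPolynomial.aeval y f = 0) →
    MvPolynomial.aeval x f = 0}

/-- `P` is not identically zero on any irreducible component of `Zero(I)`; algebraically,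
`P` lies in no minimal prime of `I`. -/
def NotIdZeroOnComponents {R : Type*} [CommRing R] (I : Ideal R) (P : R) : Prop :=
  ∀ p ∈ I.minimalPrimes, P ∉ p

/-- An ideal is unmixed if all of its associated primes have the same dimension. -/
def IsUnmixed {R : Type*} [CommRing R] (I : Ideal R) : Prop :=
  ∀ p ∈ associatedPrimes R (R ⧸ I), ∀ q ∈ associatedPrimes R (R ⧸ I),
    ringKrullDim (R ⧸ p) = ringKrullDim (R ⧸ q)

end Tri

/-!
Suppose `(T_1, …, T_{i-1}, ini T_i)` met `K[u]` only in `0`. Then it lies in a prime `Q` with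
`Q ∩ K[u] = 0`; by induction on `i` no earlier initial lies in `Q`, so `Q` contains
`sat(T_1, …, T_{i-1})` and hence one of its minimal primes `P`. In the fraction field of `K[x]/P`
each leading variable `y_k` (`k < i`) is a root of the image of `T_k`, whose leading coefficient
does not vanish there, so `y_1, …, y_{i-1}` are algebraic over the image of `K(u)`. Hence a
polynomial in `u, y_1, …, y_{i-1}` outside `P` becomes invertible modulo `P` after multiplying by
an element of `K[u] \ P`. Since `ini T_i ∈ Q` involves only these variables, it must lie in `P`,
contrary to the hypothesis.
-/

namespace Tri

section CoeffAt

variable {K σ : Type*} [CommSemiring K]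

noncomputable def coeffAt (f : MvPolynomial σ K) (i : σ) (d : ℕ) : MvPolynomial σ K :=
  ∑ m ∈ f.support.filter (fun m => m i = d), monomial (m.erase i) (coeff m f)

theorem initial_eq_coeffAt [DecidableEq σ] (f : MvPolynomial σ K) (i : σ) :
    initial f i = coeffAt f i (degreeOf i f) := rfl

theorem sum_coeffAt_mul_X_pow (f : MvPolynomial σ K) (i : σ) :
    ∑ d ∈ Finset.range (degreeOf i f + 1), coeffAt f i d * X i ^ d = f := by
  conv_rhs => rw [← support_sum_monomial_coeff f]
  rw [← Finset.sum_fiberwise_of_maps_to (g := fun m : σ →₀ ℕ => m i)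
    (t := Finset.range (degreeOf i f + 1)) fun m hm => ?_]
  · refine Finset.sum_congr rfl fun d _ => ?_
    rw [coeffAt, Finset.sum_mul]
    refine Finset.sum_congr rfl fun m hm => ?_
    rw [X_pow_eq_monomial, monomial_mul, mul_one, ← (Finset.mem_filter.mp hm).2,
      Finsupp.erase_add_single]
  · exact Finset.mem_range_succ_iff.mpr (monomial_le_degreeOf i hm)

theorem vars_coeffAt_subset [DecidableEq σ] (f : MvPolynomial σ K) (i : σ) (d : ℕ) :
    (coeffAt f i d).vars ⊆ f.vars.erase i := by
  refine (vars_sum_subset _ _).trans (Finset.biUnion_subset.mpr fun m hm => ?_)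
  by_cases hc : coeff m f = 0
  · simp [hc]
  rw [vars_monomial hc, Finsupp.support_erase]
  exact Finset.erase_subset_erase i fun v hv =>
    (mem_vars_iff_mem_support v).mpr ⟨m, (Finset.mem_filter.mp hm).1, hv⟩

theorem coeff_erase_coeffAt (f : MvPolynomial σ K) (i : σ) (m : σ →₀ ℕ) :
    coeff (m.erase i) (coeffAt f i (m i)) = coeff m f := by
  classical
  rw [coeffAt, coeff_sum, Finset.sum_eq_single m]
  · simp
  · intro m' hm' hne
    rw [coeff_monomial, if_neg]
    intro he
    apply hne
    rw [← Finsupp.erase_add_single i m', ← Finsupp.erase_add_single i m, he,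
      (Finset.mem_filter.mp hm').2]
  · intro hm
    rw [coeff_monomial, if_pos rfl]
    by_contra hc
    exact hm (Finset.mem_filter.mpr ⟨mem_support_iff.mpr hc, rfl⟩)

theorem initial_ne_zero [DecidableEq σ] {f : MvPolynomial σ K} (hf : f ≠ 0) (i : σ) :
    initial f i ≠ 0 := by
  obtain ⟨m, hm, htop⟩ :=
    Finset.exists_mem_eq_sup f.support (support_nonempty.mpr hf) fun m => m i
  intro h0
  have hcoeff := coeff_erase_coeffAt f i m
  rw [← htop, ← degreeOf_eq_sup, ← initial_eq_coeffAt, h0, coeff_zero] at hcoeff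
  exact mem_support_iff.mp hm hcoeff.symm

end CoeffAt

theorem isAlgebraic_of_sum_mul_pow_eq_zero {R A : Type*} [CommRing R] [CommRing A] [Algebra R A]
    {y : A} {c : ℕ → R} {N : ℕ} (hN : c N ≠ 0)
    (h : ∑ d ∈ Finset.range (N + 1), algebraMap R A (c d) * y ^ d = 0) : IsAlgebraic R y := by
  refine ⟨∑ d ∈ Finset.range (N + 1), Polynomial.monomial d (c d), fun hp => hN ?_, ?_⟩
  · simpa [Polynomial.finsetSum_coeff, Polynomial.coeff_monomial] using
      congrArg (Polynomial.coeff · N) hp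
  · simpa [Polynomial.aeval_monomial] using h

section Triangular

variable {K : Type*} [CommSemiring K] {n r : ℕ}

def varsBelow (lvs : Fin r → Fin n) (t : Fin r) : Set (Fin n) := {v | ∀ k, lvs k = v → k < t}

theorem coeffAt_mem_supported_varsBelow {T : Fin r → MvPolynomial (Fin n) K}
    {lvs : Fin r → Fin n} (hT : IsTriangular T lvs) (j : Fin r) (d : ℕ) :
    coeffAt (T j) (lvs j) d ∈ supported K (varsBelow lvs j) := by
  rw [mem_supported]
  intro v hv k hkv
  obtain ⟨hvj, hvT⟩ := Finset.mem_erase.mp (vars_coeffAt_subset _ _ _ hv)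
  have hle : lvs k ≤ lvs j :=
    hkv ▸ (hT.2 j).2 v (Nat.pos_of_ne_zero (mem_vars_iff_degreeOf_ne_zero.mp hvT))
  exact lt_of_le_of_ne (hT.1.le_iff_le.mp hle) (by rintro rfl; exact hvj hkv.symm)

theorem inParams_iff_mem_supported {lvs : Fin r → Fin n} {p : MvPolynomial (Fin n) K} :
    inParams lvs p ↔ p ∈ supported K (Set.range lvs)ᶜ := by
  rw [mem_supported]
  rfl

variable {T : Fin r → MvPolynomial (Fin n) K} {lvs : Fin r → Fin n}

theorem IsTriangular.ne_zero (hT : IsTriangular T lvs) (j : Fin r) : T j ≠ 0 := fun h0 => by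
  simpa [h0] using (hT.2 j).1

theorem initial_mem_supported_varsBelow (hT : IsTriangular T lvs) (j : Fin r) :
    initial (T j) (lvs j) ∈ supported K (varsBelow lvs j) :=
  coeffAt_mem_supported_varsBelow hT j _

theorem inParams_initial_of_forall_not_lt (hT : IsTriangular T lvs) {j : Fin r}
    (hj : ∀ k, ¬ k < j) : inParams lvs (initial (T j) (lvs j)) := by
  refine inParams_iff_mem_supported.mpr (supported_mono ?_ (initial_mem_supported_varsBelow hT j))
  rintro v hv ⟨k, rfl⟩
  exact hj k (hv k rfl)

end Triangular

section Saturation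

variable {K : Type*} [CommRing K] {n r : ℕ} (T : Fin r → MvPolynomial (Fin n) K)
  (lvs : Fin r → Fin n)

theorem span_range_le_satIdeal : Ideal.span (Set.range T) ≤ satIdeal T lvs :=
  fun f hf => ⟨0, by simpa using hf⟩

theorem satIdeal_le_of_isPrime {P : Ideal (MvPolynomial (Fin n) K)} [P.IsPrime]
    (hT : ∀ j, T j ∈ P) (hini : ∀ j, initial (T j) (lvs j) ∉ P) : satIdeal T lvs ≤ P := by
  rintro f ⟨d, hd⟩
  have hspan : Ideal.span (Set.range T) ≤ P := Ideal.span_le.mpr (Set.range_subset_iff.mpr hT)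
  have hprod : initProd T lvs ∉ P := fun h =>
    let ⟨j, _, hj⟩ := Ideal.IsPrime.prod_mem_iff.mp h
    hini j hj
  exact ((‹P.IsPrime›.mem_or_mem (hspan hd)).resolve_left
    fun h => hprod (‹P.IsPrime›.mem_of_pow_mem _ h))

end Saturation

section Fractions

variable {R L : Type*} [CommRing R] [Field L] (ψ : R →+* L)

/-- The image of the localization of `R` at the elements `s ∈ M` with `ψ s ≠ 0`. -/
def fractionsOver (M : Submonoid R) : Subring L where
  carrier := {x | ∃ s ∈ M, ψ s ≠ 0 ∧ x * ψ s ∈ ψ.range}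
  one_mem' := ⟨1, M.one_mem, by simp, 1, by simp⟩
  mul_mem' := by
    rintro x y ⟨s, hs, hs0, g, hg⟩ ⟨s', hs', hs0', g', hg'⟩
    refine ⟨s * s', M.mul_mem hs hs', by simp [hs0, hs0'], g * g', ?_⟩
    rw [map_mul, map_mul, hg, hg']
    ring
  add_mem' := by
    rintro x y ⟨s, hs, hs0, g, hg⟩ ⟨s', hs', hs0', g', hg'⟩
    refine ⟨s * s', M.mul_mem hs hs', by simp [hs0, hs0'], g * s' + g' * s, ?_⟩
    rw [map_add, map_mul, map_mul, map_mul, hg, hg']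
    ring
  zero_mem' := ⟨1, M.one_mem, by simp, 0, by simp⟩
  neg_mem' := by
    rintro x ⟨s, hs, hs0, g, hg⟩
    exact ⟨s, hs, hs0, -g, by rw [map_neg, hg, neg_mul]⟩

theorem map_mem_fractionsOver (M : Submonoid R) (a : R) : ψ a ∈ fractionsOver ψ M :=
  ⟨1, M.one_mem, by simp, a, by simp⟩

theorem closure_image_subset_fractionsOver (M : Subring R) :
    (Subfield.closure (ψ '' M) : Set L) ⊆ fractionsOver ψ M.toSubmonoid := by
  intro x hx
  obtain ⟨y, hy, z, hz, rfl⟩ := Subfield.mem_closure_iff.mp hx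
  rw [← Subring.coe_map, Subring.closure_eq] at hy hz
  obtain ⟨a, ha, rfl⟩ := Subring.mem_map.mp hy
  obtain ⟨b, hb, rfl⟩ := Subring.mem_map.mp hz
  by_cases hb0 : ψ b = 0
  · rw [hb0, div_zero]
    exact (fractionsOver ψ M.toSubmonoid).zero_mem
  exact ⟨b, hb, hb0, a, by rw [div_mul_cancel₀ _ hb0]⟩

end Fractions

section Specialization

variable {K L : Type*} [CommRing K] [Field L] {n r : ℕ} (ψ : MvPolynomial (Fin n) K →+* L)
  (lvs : Fin r → Fin n)

abbrev paramField : Subfield L := Subfield.closure (ψ '' supported K (Set.range lvs)ᶜ)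

def leadingValues (t : Fin r) : Set L := (fun j => ψ (X (lvs j))) '' Set.Iio t

theorem map_mem_adjoin_leadingValues {t : Fin r} {a : MvPolynomial (Fin n) K}
    (ha : a ∈ supported K (varsBelow lvs t)) :
    ψ a ∈ IntermediateField.adjoin (paramField ψ lvs) (leadingValues ψ lvs t) := by
  have hparam : ∀ b ∈ supported K (Set.range lvs)ᶜ,
      ψ b ∈ IntermediateField.adjoin (paramField ψ lvs) (leadingValues ψ lvs t) := fun b hb =>
    IntermediateField.algebraMap_mem _
      (⟨ψ b, Subfield.subset_closure ⟨b, hb, rfl⟩⟩ : paramField ψ lvs)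
  rw [supported_eq_adjoin_X] at ha
  induction ha using Algebra.adjoin_induction with
  | mem x hx =>
    obtain ⟨v, hv, rfl⟩ := hx
    by_cases hvr : v ∈ Set.range lvs
    · obtain ⟨k, rfl⟩ := hvr
      exact IntermediateField.subset_adjoin _ _ ⟨k, hv k rfl, rfl⟩
    · exact hparam _ (Algebra.subset_adjoin ⟨v, hvr, rfl⟩)
  | algebraMap c => exact hparam _ (Subalgebra.algebraMap_mem _ c)
  | add x y _ _ hx hy => rw [map_add]; exact add_mem hx hy
  | mul x y _ _ hx hy => rw [map_mul]; exact mul_mem hx hy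

variable {ψ lvs} {T : Fin r → MvPolynomial (Fin n) K} {t : Fin r}

theorem isAlgebraic_of_mem_leadingValues (hT : IsTriangular T lvs)
    (hψT : ∀ k < t, ψ (T k) = 0) (hψini : ∀ k < t, ψ (initial (T k) (lvs k)) ≠ 0) :
    ∀ y ∈ leadingValues ψ lvs t, IsAlgebraic (paramField ψ lvs) y := by
  rintro _ ⟨j, hj : j < t, rfl⟩
  induction j using WellFoundedLT.induction with
  | ind j ih =>
  let F := IntermediateField.adjoin (paramField ψ lvs) (leadingValues ψ lvs j)
  have : Algebra.IsAlgebraic (paramField ψ lvs) F := IntermediateField.isAlgebraic_adjoin <| by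
    rintro _ ⟨k, hk, rfl⟩
    exact (ih k hk (lt_trans hk hj)).isIntegral
  refine IsAlgebraic.restrictScalars (S := F) _ (isAlgebraic_of_sum_mul_pow_eq_zero
    (c := fun d => ⟨ψ (coeffAt (T j) (lvs j) d),
      map_mem_adjoin_leadingValues ψ lvs (coeffAt_mem_supported_varsBelow hT j d)⟩)
    (N := degreeOf (lvs j) (T j)) (fun h => hψini j hj (congrArg Subtype.val h)) ?_)
  have := congrArg ψ (sum_coeffAt_mul_X_pow (T j) (lvs j))
  simpa [map_sum, hψT j hj] using this

theorem exists_map_mul_eq_of_mem_supported (hT : IsTriangular T lvs)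
    (hψT : ∀ k < t, ψ (T k) = 0) (hψini : ∀ k < t, ψ (initial (T k) (lvs k)) ≠ 0)
    {a : MvPolynomial (Fin n) K} (ha : a ∈ supported K (varsBelow lvs t)) (ha0 : ψ a ≠ 0) :
    ∃ g, ∃ s ∈ supported K (Set.range lvs)ᶜ, ψ s ≠ 0 ∧ ψ (a * g) = ψ s := by
  have hinv : (ψ a)⁻¹ ∈ Algebra.adjoin (paramField ψ lvs) (leadingValues ψ lvs t) := by
    rw [← IntermediateField.adjoin_toSubalgebra_of_isAlgebraic
      (isAlgebraic_of_mem_leadingValues hT hψT hψini)]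
    exact IntermediateField.inv_mem _ (map_mem_adjoin_leadingValues ψ lvs ha)
  have hle : (Algebra.adjoin (paramField ψ lvs) (leadingValues ψ lvs t)).toSubring ≤
      fractionsOver ψ (supported K (Set.range lvs)ᶜ).toSubring.toSubmonoid := by
    rw [Algebra.adjoin_eq_ring_closure, Subring.closure_le]
    rintro _ (⟨c, rfl⟩ | ⟨j, -, rfl⟩)
    · exact closure_image_subset_fractionsOver ψ _ c.2
    · exact map_mem_fractionsOver ψ _ _
  obtain ⟨s, hs, hs0, g, hg⟩ := hle hinv
  exact ⟨g, s, hs, hs0, by rw [map_mul, hg, ← mul_assoc, mul_inv_cancel₀ ha0, one_mul]⟩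

end Specialization

section Primes

variable {K : Type*} [CommRing K] {n r : ℕ} {T : Fin r → MvPolynomial (Fin n) K}
  {lvs : Fin r → Fin n}

theorem mem_of_mem_supported_varsBelow (hT : IsTriangular T lvs) {t : Fin r}
    {P Q : Ideal (MvPolynomial (Fin n) K)} [P.IsPrime] (hPQ : P ≤ Q)
    (hQ : ∀ s ∈ Q, inParams lvs s → s = 0) (hTP : ∀ k < t, T k ∈ P)
    (hini : ∀ k < t, initial (T k) (lvs k) ∉ P) {f : MvPolynomial (Fin n) K} (hfQ : f ∈ Q)
    (hf : f ∈ supported K (varsBelow lvs t)) : f ∈ P := by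
  let ψ := (algebraMap _ (FractionRing (MvPolynomial (Fin n) K ⧸ P))).comp (Ideal.Quotient.mk P)
  have hψ : ∀ x, ψ x = 0 ↔ x ∈ P := fun x => by
    simp [ψ, Ideal.Quotient.eq_zero_iff_mem]
  by_contra hfP
  obtain ⟨g, s, hs, hs0, hfg⟩ := exists_map_mul_eq_of_mem_supported hT
    (fun k hk => (hψ _).mpr (hTP k hk)) (fun k hk => mt (hψ _).mp (hini k hk)) hf
    (mt (hψ f).mp hfP)
  have hsQ : s ∈ Q := by
    have hdiff : f * g - s ∈ Q := hPQ ((hψ _).mp (by rw [map_sub, hfg, sub_self]))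
    simpa using Q.sub_mem (Q.mul_mem_right g hfQ) hdiff
  exact hs0 (by rw [hQ s hsQ (inParams_iff_mem_supported.mpr hs), map_zero])

theorem exists_le_isPrime_of_inParams_eq_zero [IsDomain K]
    {I : Ideal (MvPolynomial (Fin n) K)} (hI : ∀ p ∈ I, inParams lvs p → p = 0) :
    ∃ Q : Ideal (MvPolynomial (Fin n) K),
      Q.IsPrime ∧ I ≤ Q ∧ ∀ s ∈ Q, inParams lvs s → s = 0 := by
  let S := (supported K (Set.range lvs)ᶜ).toSubmonoid ⊓ nonZeroDivisors (MvPolynomial (Fin n) K)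
  have hS : ∀ {s}, s ∈ S ↔ inParams lvs s ∧ s ≠ 0 := by
    simp [S, inParams_iff_mem_supported, mem_nonZeroDivisors_iff_ne_zero]
  have hdisj : Disjoint (I : Set (MvPolynomial (Fin n) K)) S :=
    Set.disjoint_left.mpr fun p hp hpS => (hS.mp hpS).2 (hI p hp (hS.mp hpS).1)
  obtain ⟨Q, hQ, hIQ, hQS⟩ := Ideal.exists_le_prime_disjoint I S hdisj
  exact ⟨Q, hQ, hIQ, fun s hs hpar =>
    by_contra fun hs0 => Set.disjoint_left.mp hQS hs (hS.mpr ⟨hpar, hs0⟩)⟩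

theorem exists_mem_minimalPrimes_initial_mem (hT : IsTriangular T lvs) {i : Fin r}
    {Q : Ideal (MvPolynomial (Fin n) K)} [Q.IsPrime] (hQ : ∀ s ∈ Q, inParams lvs s → s = 0)
    (hTQ : ∀ k < i, T k ∈ Q) (hiniQ : ∀ k < i, initial (T k) (lvs k) ∉ Q)
    (hi : initial (T i) (lvs i) ∈ Q) :
    ∃ P ∈ (satIdeal (fun j : Fin (i : ℕ) => T ⟨j.1, j.isLt.trans i.isLt⟩)
      (fun j : Fin (i : ℕ) => lvs ⟨j.1, j.isLt.trans i.isLt⟩)).minimalPrimes,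
      initial (T i) (lvs i) ∈ P := by
  obtain ⟨P, hPmin, hPQ⟩ := Ideal.exists_minimalPrimes_le
    (satIdeal_le_of_isPrime _ _ (fun j => hTQ ⟨j, j.isLt.trans i.isLt⟩ j.isLt)
      fun j => hiniQ ⟨j, j.isLt.trans i.isLt⟩ j.isLt)
  have hTP : ∀ k < i, T k ∈ P := fun k hk =>
    hPmin.1.2 (span_range_le_satIdeal _ _ (Ideal.subset_span ⟨⟨k, hk⟩, rfl⟩))
  have : P.IsPrime := hPmin.1.1
  exact ⟨P, hPmin, mem_of_mem_supported_varsBelow hT hPQ hQ hTP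
    (fun k hk hkP => hiniQ k hk (hPQ hkP)) hi (initial_mem_supported_varsBelow hT i)⟩

end Primes

end Tri

open Tri in
theorem isRegular_of_initial_notIdZero_general
    {K : Type*} [Field K] {n r : ℕ}
    (T : Fin r → MvPolynomial (Fin n) K) (lvs : Fin r → Fin n)
    (hT : IsTriangular T lvs)
    (h : ∀ i : Fin r, 0 < (i : ℕ) →
      NotIdZeroOnComponents
        (satIdeal (fun j : Fin (i : ℕ) => T ⟨j.1, j.isLt.trans i.isLt⟩)
          (fun j : Fin (i : ℕ) => lvs ⟨j.1, j.isLt.trans i.isLt⟩))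
        (initial (T i) (lvs i))) :
    IsRegular T lvs := by
  refine ⟨hT, fun i => ?_⟩
  induction i using WellFoundedLT.induction with
  | ind i ih =>
  by_contra hnone
  have hI : ∀ p ∈ Ideal.span (T '' {j | j < i} ∪ {initial (T i) (lvs i)}),
      inParams lvs p → p = 0 := fun p hp hpar => by_contra fun hp0 => hnone ⟨p, hp, hp0, hpar⟩
  have hiniI :
      initial (T i) (lvs i) ∈ Ideal.span (T '' {j | j < i} ∪ {initial (T i) (lvs i)}) :=
    Ideal.subset_span (Or.inr rfl)
  rcases Nat.eq_zero_or_pos i.val with h0 | hpos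
  · exact initial_ne_zero (hT.ne_zero i) _
      (hI _ hiniI (inParams_initial_of_forall_not_lt hT fun k hk => by omega))
  obtain ⟨Q, hQ, hIQ, hQpar⟩ := exists_le_isPrime_of_inParams_eq_zero hI
  have hTQ : ∀ k < i, T k ∈ Q := fun k hk => hIQ (Ideal.subset_span (Or.inl ⟨k, hk, rfl⟩))
  have hiniQ : ∀ k < i, initial (T k) (lvs k) ∉ Q := fun k hk hkQ => by
    obtain ⟨p, hp, hp0, hpar⟩ := ih k hk
    refine hp0 (hQpar p (Ideal.span_le.mpr ?_ hp) hpar)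
    rintro _ (⟨j, hj, rfl⟩ | rfl)
    exacts [hTQ j (lt_trans hj hk), hkQ]
  obtain ⟨P, hPmin, hP⟩ := exists_mem_minimalPrimes_initial_mem hT hQpar hTQ hiniQ (hIQ hiniI)
  exact h i hpos P hPmin hP

open Tri in
/-- A triangular set `T = {T_1, …, T_r}` is regular if for each `2 ≤ i ≤ r` the initial
`ini(T_i)` is not identically zero on any irreducible component of
`Zero(sat({T_1, …, T_{i-1}}))`. -/
theorem isRegular_of_initial_notIdZero
    {K : Type*} [Field K] [CharZero K] {n r : ℕ}
    (T : Fin r → MvPolynomial (Fin n) K) (lvs : Fin r → Fin n)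
    (hT : IsTriangular T lvs)
    (h : ∀ i : Fin r, 0 < (i : ℕ) →
      NotIdZeroOnComponents
        (satIdeal (fun j : Fin (i : ℕ) => T ⟨j.1, j.isLt.trans i.isLt⟩)
          (fun j : Fin (i : ℕ) => lvs ⟨j.1, j.isLt.trans i.isLt⟩))
        (initial (T i) (lvs i))) :
    IsRegular T lvs :=
  isRegular_of_initial_notIdZero_general T lvs hT h
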